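/- For all integers n ≥ 1, b ∈ {0,…,n}, every switch pattern 𝐬 = (s_1,…,s_k) with s_r ∈ {0,…,n}, and every permutation π of {1,…,k}, the product matrices satisfy P_{n,b,𝐬} = P_{n,b,π(𝐬)}, where P_{n,b,𝐬} = Π_{r=1}^{k} P_{n,b,s_r} and π(𝐬) = (s_{π(1)},…,s_{π(k)}); equivalently, the matrices P_{n,b,s} for s = 0,…,n pairwise commute. -/

import Mathlib

open Finset Matrix

/-- Kronecker product of a `2 × 2` matrix with a `k × k` matrix, with indices flattened. -/
noncomputable def kron2 {k : ℕ} (A : Matrix (Fin 2) (Fin 2) ℝ) (B : Matrix (Fin k) (Fin k) ℝ) :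
    Matrix (Fin (2 * k)) (Fin (2 * k)) ℝ :=
  Matrix.of fun i j =>
    A ⟨(i : ℕ) / k, by
        rcases Nat.eq_zero_or_pos k with h | h
        · exact absurd i.isLt (by omega)
        · exact (Nat.div_lt_iff_lt_mul h).mpr (by have := i.isLt; omega)⟩
      ⟨(j : ℕ) / k, by
        rcases Nat.eq_zero_or_pos k with h | h
        · exact absurd j.isLt (by omega)
        · exact (Nat.div_lt_iff_lt_mul h).mpr (by have := j.isLt; omega)⟩
    * B ⟨(i : ℕ) % k, by
        rcases Nat.eq_zero_or_pos k with h | h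
        · exact absurd i.isLt (by omega)
        · exact Nat.mod_lt _ h⟩
      ⟨(j : ℕ) % k, by
        rcases Nat.eq_zero_or_pos k with h | h
        · exact absurd j.isLt (by omega)
        · exact Nat.mod_lt _ h⟩

theorem two_mul_pow (b : ℕ) : 2 * 2 ^ b = 2 ^ (b + 1) := by rw [pow_succ]; ring

/-- `P = [[0,1],[1,0]]`. -/
noncomputable def pM : Matrix (Fin 2) (Fin 2) ℝ := !![0, 1; 1, 0]

/-- The matrices `P_{n,b,s}`, defined by the recursion
`P_{n,0,s} = (1)` and
`P_{n,b,s} = (s/n)(P ⊗ P_{n−1,b−1,s−1}) + (1 − s/n)(I₂ ⊗ P_{n−1,b−1,s})`. -/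
noncomputable def Pmat : (b : ℕ) → ℕ → ℕ → Matrix (Fin (2 ^ b)) (Fin (2 ^ b)) ℝ
  | 0, _, _ => 1
  | b + 1, n, s =>
    Matrix.reindex (finCongr (two_mul_pow b)) (finCongr (two_mul_pow b))
      (((s : ℝ) / (n : ℝ)) • kron2 pM (Pmat b (n - 1) (s - 1))
        + (1 - (s : ℝ) / (n : ℝ)) • kron2 (1 : Matrix (Fin 2) (Fin 2) ℝ) (Pmat b (n - 1) s))

open scoped Kronecker

theorem List.prod_ofFn_comp_perm_of_commute {M : Type*} [Monoid M] {k : ℕ} (f : Fin k → M)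
    (hf : ∀ i j, Commute (f i) (f j)) (π : Equiv.Perm (Fin k)) :
    (List.ofFn (f ∘ π)).prod = (List.ofFn f).prod :=
  (Equiv.Perm.ofFn_comp_perm π f).prod_eq' (List.pairwise_ofFn.mpr fun _ _ _ => hf _ _)

lemma kron2_eq_reindex_kronecker {k : ℕ} (A : Matrix (Fin 2) (Fin 2) ℝ)
    (B : Matrix (Fin k) (Fin k) ℝ) :
    kron2 A B = reindex finProdFinEquiv finProdFinEquiv (A ⊗ₖ B) :=
  rfl

lemma kron2_mul_kron2 {k : ℕ} (A C : Matrix (Fin 2) (Fin 2) ℝ) (B D : Matrix (Fin k) (Fin k) ℝ) :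
    kron2 A B * kron2 C D = kron2 (A * C) (B * D) := by
  simp only [kron2_eq_reindex_kronecker, reindex_apply, submatrix_mul_equiv, mul_kronecker_mul]

lemma Commute.kron2 {k : ℕ} {A C : Matrix (Fin 2) (Fin 2) ℝ} {B D : Matrix (Fin k) (Fin k) ℝ}
    (hAC : Commute A C) (hBD : Commute B D) : Commute (kron2 A B) (kron2 C D) := by
  rw [Commute, SemiconjBy, kron2_mul_kron2, kron2_mul_kron2, hAC.eq, hBD.eq]

-- Each `P_{n,b+1,s}` lies in the span of `P ⊗ X` and `I₂ ⊗ X` with `X` among the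
-- `P_{n-1,b,·}`, and these pairwise commute because `P` commutes with `I₂` and with itself.
lemma Pmat_commute (b n s₁ s₂ : ℕ) : Commute (Pmat b n s₁) (Pmat b n s₂) := by
  induction b generalizing n s₁ s₂ with
  | zero => exact Commute.one_left 1
  | succ b ih =>
    rw [Pmat, Pmat]
    refine (Commute.map ?_ (reindexAlgEquiv ℝ ℝ (finCongr (two_mul_pow b))))
    refine .add_left (.add_right ?_ ?_) (.add_right ?_ ?_) <;>
      exact .smul_left (.smul_right (.kron2 (by simp) (ih _ _ _)) _) _

theorem Pmat_prod_perm_invariant_general (n b : ℕ) :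
    (∀ k : ℕ, ∀ s : Fin k → ℕ, (∀ r, s r ≤ n) → ∀ π : Equiv.Perm (Fin k),
      (List.ofFn (fun r => Pmat b n (s r))).prod
        = (List.ofFn (fun r => Pmat b n (s (π r)))).prod) ∧
    (∀ s₁ s₂ : ℕ, s₁ ≤ n → s₂ ≤ n → Commute (Pmat b n s₁) (Pmat b n s₂)) :=
  ⟨fun _ _ _ π => (List.prod_ofFn_comp_perm_of_commute _ (fun _ _ => Pmat_commute _ _ _ _) π).symm,
    fun s₁ s₂ _ _ => Pmat_commute b n s₁ s₂⟩

/-- The distribution of the lightbulb chain does not depend on the order in which the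
switch counts are applied: the matrices `P_{n,b,s}` pairwise commute, so that
`P_{n,b,𝐬} = P_{n,b,π(𝐬)}` for every permutation `π`. -/
theorem Pmat_prod_perm_invariant (n b : ℕ) (hn : 1 ≤ n) (hb : b ≤ n) :
    (∀ k : ℕ, ∀ s : Fin k → ℕ, (∀ r, s r ≤ n) → ∀ π : Equiv.Perm (Fin k),
      (List.ofFn (fun r => Pmat b n (s r))).prod
        = (List.ofFn (fun r => Pmat b n (s (π r)))).prod) ∧
    (∀ s₁ s₂ : ℕ, s₁ ≤ n → s₂ ≤ n → Commute (Pmat b n s₁) (Pmat b n s₂)) :=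
  Pmat_prod_perm_invariant_general n b
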